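/- arXiv:0902.4304 — 2 statements merged into one kernel-verified Lean document; each statement's English description precedes it below -/
import Mathlib

section
/- Law of large numbers for the optimal and suboptimal loads: under assumption (C1), almost surely lim_{n→∞} ρₙ/n = lim_{n→∞} ρ̄ₙ/n = γ. -/
/-!
Write `g = min_l c_l`. Whatever the allocation, the three bins together carry at least
`∑_k g(X_k)`, so `3 ρₙ ≥ ∑_k g(X_k)`; and `ρₙ ≤ ρ̄ₙ` because the Voronoi allocation is one of the
allocations. By the strong law, `ρ̄ₙ/n → max_l ∫_{𝕋_l} c_l` and `(∑_k g(X_k))/n → ∫_𝕋 g`.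
Multiplication by a power of `j` permutes the bins, hence maps the Voronoi regions onto each
other (the half-lines `D_l` are null), and turns `c_l` into `c₁`; so every `∫_{𝕋_l} c_l` equals `γ`.
Transported by the same rotations, (C1) says that `g = c_l` on `𝕋_l` away from the null set of
points equidistant from two bins, so `∫_𝕋 g = 3γ`, and `ρₙ/n` is squeezed to `γ`.
-/

open MeasureTheory Filter Asymptotics

noncomputable section

namespace LoadOpt

/-- `j = e^{2iπ/3}`, primitive cube root of unity. -/
def jc : ℂ := Complex.exp (2 * Real.pi * Complex.I / 3)

/-- `λ = 2 (3√3)^{-1/2}`. -/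
def lam : ℝ := 2 / Real.sqrt (3 * Real.sqrt 3)

/-- The bins `B₁, B₂, B₃` (indexed by `0, 1, 2`). -/
def Bin : Fin 3 → ℂ := ![jc ^ 2 * (lam * Complex.I), (lam : ℂ) * Complex.I, jc * (lam * Complex.I)]

/-- The triangle `𝕋`, convex hull of the three bins. -/
def Tri : Set ℂ := convexHull ℝ {Bin 0, Bin 1, Bin 2}

/-- Cost functions `c₁, c₂, c₃` (indexed by `0, 1, 2`). -/
def costs (c : ℂ → ℝ) : Fin 3 → ℂ → ℝ := ![c, fun x => c (jc ^ 2 * x), fun x => c (jc * x)]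

/-- Half-lines removed to make the Voronoi cells a partition: `D₁ = {ijt : t < 0}`,
`D_l = {ij^l t : t ≤ 0}` for `l = 2, 3`. -/
def Dl : Fin 3 → Set ℂ :=
  ![{z | ∃ t : ℝ, t < 0 ∧ z = Complex.I * jc * t},
    {z | ∃ t : ℝ, t ≤ 0 ∧ z = Complex.I * jc ^ 2 * t},
    {z | ∃ t : ℝ, t ≤ 0 ∧ z = Complex.I * jc ^ 3 * t}]

/-- The Voronoi cells `𝕋₁, 𝕋₂, 𝕋₃` (indexed by `0, 1, 2`). -/
def cell (l : Fin 3) : Set ℂ :=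
  {x ∈ Tri | dist x (Bin l) = ⨅ m : Fin 3, dist x (Bin m)} \ Dl l

/-- The load `ρₙ(A)` of the allocation `A` of the points `x 0, …, x (n-1)`. -/
def load (c : ℂ → ℝ) {n : ℕ} (x : Fin n → ℂ) (A : Fin n → Fin 3) : ℝ :=
  Finset.univ.sup' Finset.univ_nonempty fun l => ∑ k, if A k = l then costs c l (x k) else 0

/-- The optimal load `ρₙ`. -/
def optLoad (c : ℂ → ℝ) {n : ℕ} (x : Fin n → ℂ) : ℝ :=
  Finset.univ.inf' Finset.univ_nonempty fun A : Fin n → Fin 3 => load c x A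

/-- The suboptimal load `ρ̄ₙ`, allocating each point to the bin of its Voronoi cell. -/
def subLoad (c : ℂ → ℝ) {n : ℕ} (x : Fin n → ℂ) : ℝ :=
  Finset.univ.sup' Finset.univ_nonempty fun l => ∑ k, (cell l).indicator (costs c l) (x k)

/-- `γ = ∫_{𝕋₁} c`. -/
def gamma (c : ℂ → ℝ) : ℝ := ∫ x in cell 0, c x

/-- Assumption (C1). -/
def C1 (c : ℂ → ℝ) : Prop :=
  ∀ x ∈ Tri, ∀ l : Fin 3, l ≠ 0 → dist x (Bin 0) < dist x (Bin l) → costs c 0 x < costs c l x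

/-- Assumption (C2): symmetry of `c` w.r.t. the line through `0` and `B₁`, plus a Lipschitz
property near `D₁ ∪ D₃`. -/
def C2 (c : ℂ → ℝ) : Prop :=
  (∀ θ ∈ Set.Icc (0 : ℝ) (2 * Real.pi), ∀ t : ℝ, 0 < t →
      (t : ℂ) * Complex.exp ((θ : ℂ) * Complex.I) ∈ Tri →
      c ((t : ℂ) * Complex.exp ((θ : ℂ) * Complex.I))
        = c ((t : ℂ) * Complex.exp (((-θ - Real.pi / 3 : ℝ) : ℂ) * Complex.I))) ∧
  ∃ (K : NNReal) (U : Set ℂ), IsOpen U ∧ Dl 0 ∪ Dl 2 ⊆ U ∧ LipschitzOnWith K c U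

open Topology ProbabilityTheory

section StrongLaw

variable {Ω E : Type*} [MeasurableSpace Ω] [MeasurableSpace E] {P : Measure Ω} {μ : Measure E}
  {X : ℕ → Ω → E}

lemma ae_tendsto_sum_div_of_map_eq (hX_meas : ∀ k, Measurable (X k))
    (hX_law : ∀ k, P.map (X k) = μ)
    (hX_indep : Pairwise fun i j => IndepFun (X i) (X j) P)
    {f : E → ℝ} (hf : Measurable f) (hfi : Integrable f μ) :
    ∀ᵐ ω ∂P, Tendsto (fun n : ℕ => (∑ k : Fin n, f (X k ω)) / n) atTop (𝓝 (∫ x, f x ∂μ)) := by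
  have hident (k : ℕ) : IdentDistrib (f ∘ X k) (f ∘ X 0) P P :=
    ⟨(hf.comp (hX_meas k)).aemeasurable, (hf.comp (hX_meas 0)).aemeasurable, by
      rw [← Measure.map_map hf (hX_meas k), ← Measure.map_map hf (hX_meas 0), hX_law, hX_law]⟩
  have hint : Integrable (f ∘ X 0) P :=
    (integrable_map_measure hf.aestronglyMeasurable (hX_meas 0).aemeasurable).1 (hX_law 0 ▸ hfi)
  have hmean : ∫ ω, f (X 0 ω) ∂P = ∫ x, f x ∂μ := by
    rw [← hX_law 0, integral_map (hX_meas 0).aemeasurable hf.aestronglyMeasurable]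
  filter_upwards [strong_law_ae (fun k => f ∘ X k) hint
    (fun i j hij => (hX_indep hij).comp hf hf) hident] with ω hω
  simpa [Fin.sum_univ_eq_sum_range (fun k => f (X k ω)), hmean, div_eq_inv_mul] using hω

lemma ae_forall_of_map_eq (hX_meas : ∀ k, Measurable (X k)) (hX_law : ∀ k, P.map (X k) = μ)
    {p : E → Prop} (hp : ∀ᵐ x ∂μ, p x) : ∀ᵐ ω ∂P, ∀ k, p (X k ω) :=
  ae_all_iff.2 fun k => ae_of_ae_map (hX_meas k).aemeasurable (hX_law k ▸ hp)

end StrongLaw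

lemma volume_image_mul_ofReal (w : ℂ) (s : Set ℝ) : volume ((fun t : ℝ => w * t) '' s) = 0 := by
  have hne : (Submodule.span ℝ {w} : Submodule ℝ ℂ) ≠ ⊤ := by
    intro htop
    have := finrank_span_le_card (R := ℝ) ({w} : Set ℂ)
    rw [htop, finrank_top, Complex.finrank_real_complex] at this
    simp at this
  refine measure_mono_null ?_ (Measure.addHaar_submodule _ _ hne)
  rintro _ ⟨t, -, rfl⟩
  exact Submodule.mem_span_singleton.2 ⟨t, by simp [mul_comm]⟩

lemma measurableSet_image_mul_ofReal {w : ℂ} (hw : w ≠ 0) {s : Set ℝ} (hs : MeasurableSet s) :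
    MeasurableSet ((fun t : ℝ => w * t) '' s) := by
  have hinj : Function.Injective fun t : ℝ => w * t := fun a b hab => by
    simpa using mul_left_cancel₀ hw hab
  have hemb := (continuous_const.mul Complex.continuous_ofReal).measurableEmbedding hinj
  exact hemb.measurableSet_image' hs

lemma isPrimitiveRoot_jc : IsPrimitiveRoot jc 3 := by
  simpa [jc] using Complex.isPrimitiveRoot_exp 3 (by norm_num)

lemma jc_pow_mod (n : ℕ) : jc ^ n = jc ^ (n % 3) :=
  pow_eq_pow_mod n isPrimitiveRoot_jc.pow_eq_one

lemma jc_pow_val_add (k m : Fin 3) : jc ^ (k + m).val = jc ^ k.val * jc ^ m.val := by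
  rw [← pow_add, jc_pow_mod (k.val + m.val), Fin.val_add]

lemma jc_pow_val_neg_mul (k : Fin 3) (x : ℂ) : jc ^ (-k).val * (jc ^ k.val * x) = x := by
  rw [← mul_assoc, ← jc_pow_val_add, neg_add_cancel, Fin.val_zero, pow_zero, one_mul]

lemma norm_jc_pow (n : ℕ) : ‖jc ^ n‖ = 1 := by
  rw [norm_pow, isPrimitiveRoot_jc.norm'_eq_one (by norm_num), one_pow]

lemma jc_eq_circleExp : jc = Circle.exp (2 * Real.pi / 3) := by
  rw [Circle.coe_exp, jc]
  push_cast
  ring_nf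

lemma lam_ne_zero : lam ≠ 0 := by
  unfold lam
  positivity

lemma Bin_eq (m : Fin 3) : Bin m = jc ^ (m.val + 2) * (lam * Complex.I) := by
  fin_cases m <;> simp [Bin, jc_pow_mod 3, jc_pow_mod 4]

lemma jc_pow_mul_Bin (k m : Fin 3) : jc ^ k.val * Bin m = Bin (m + k) := by
  rw [Bin_eq, Bin_eq, ← mul_assoc, ← pow_add, jc_pow_mod, jc_pow_mod ((m + k).val + 2), Fin.val_add]
  congr 2
  omega

lemma Bin_injective : Function.Injective Bin := by
  intro l m h
  rw [Bin_eq, Bin_eq, mul_left_inj' (by simp [lam_ne_zero]), pow_add, pow_add,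
    mul_left_inj' (pow_ne_zero _ (isPrimitiveRoot_jc.ne_zero (by norm_num)))] at h
  exact Fin.ext (isPrimitiveRoot_jc.pow_inj l.isLt m.isLt h)

lemma dist_jc_pow_mul_Bin (k : Fin 3) (x : ℂ) (m : Fin 3) :
    dist (jc ^ k.val * x) (Bin (m + k)) = dist x (Bin m) := by
  rw [← jc_pow_mul_Bin, dist_eq_norm, ← mul_sub, norm_mul, norm_jc_pow, one_mul, dist_eq_norm]

lemma iInf_dist_jc_pow_mul_Bin (k : Fin 3) (x : ℂ) :
    ⨅ m, dist (jc ^ k.val * x) (Bin m) = ⨅ m, dist x (Bin m) := by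
  rw [← (Equiv.addRight k).iInf_comp]
  simp only [Equiv.coe_addRight, dist_jc_pow_mul_Bin]

lemma range_Bin : Set.range Bin = {Bin 0, Bin 1, Bin 2} := by
  ext z
  simp [Fin.exists_fin_succ, eq_comm]

lemma jc_pow_mul_mem_Tri_of_mem (k : Fin 3) {x : ℂ} (hx : x ∈ Tri) : jc ^ k.val * x ∈ Tri := by
  have himage : LinearMap.mulLeft ℝ (jc ^ k.val) '' Set.range Bin = Set.range Bin := by
    rw [← Set.range_comp]
    simpa only [Function.comp_def, LinearMap.mulLeft_apply, jc_pow_mul_Bin, Equiv.coe_addRight]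
      using (Equiv.addRight k).surjective.range_comp Bin
  rw [Tri, ← range_Bin, ← himage, ← LinearMap.image_convexHull]
  exact ⟨x, by rwa [Tri, ← range_Bin] at hx, rfl⟩

lemma jc_pow_mul_mem_Tri (k : Fin 3) (x : ℂ) : jc ^ k.val * x ∈ Tri ↔ x ∈ Tri :=
  ⟨fun h => jc_pow_val_neg_mul k x ▸ jc_pow_mul_mem_Tri_of_mem (-k) h,
    jc_pow_mul_mem_Tri_of_mem k⟩

lemma isCompact_Tri : IsCompact Tri :=
  (Set.toFinite _).isCompact_convexHull ℝ

lemma measurableSet_Tri : MeasurableSet Tri :=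
  isCompact_Tri.isClosed.measurableSet

lemma costs_apply (c : ℂ → ℝ) (m : Fin 3) (x : ℂ) : costs c m x = c (jc ^ (2 * m.val) * x) := by
  fin_cases m <;> simp [costs, jc_pow_mod 4]

lemma costs_add_jc_pow_mul (c : ℂ → ℝ) (k m : Fin 3) (x : ℂ) :
    costs c (m + k) (jc ^ k.val * x) = costs c m x := by
  rw [costs_apply, costs_apply, ← mul_assoc, ← pow_add, jc_pow_mod, jc_pow_mod (2 * m.val),
    Fin.val_add]
  congr 3
  omega

lemma costs_eq_comp_jc_pow (c : ℂ → ℝ) (l : Fin 3) (x : ℂ) :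
    costs c l x = c (jc ^ (-l).val * x) := by
  simpa [costs] using (costs_add_jc_pow_mul c (-l) l x).symm

lemma measurable_costs {c : ℂ → ℝ} (hc : Measurable c) (l : Fin 3) : Measurable (costs c l) := by
  simp_rw [funext (costs_eq_comp_jc_pow c l)]
  exact hc.comp (measurable_const_mul _)

lemma costs_nonneg {c : ℂ → ℝ} (hc : ∀ x, 0 ≤ c x) (l : Fin 3) (x : ℂ) : 0 ≤ costs c l x := by
  rw [costs_eq_comp_jc_pow]
  exact hc _

lemma costs_le_of_mem_Tri {c : ℂ → ℝ} {M : ℝ} (hM : ∀ x ∈ Tri, c x ≤ M) (l : Fin 3) {x : ℂ}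
    (hx : x ∈ Tri) : costs c l x ≤ M := by
  rw [costs_eq_comp_jc_pow]
  exact hM _ ((jc_pow_mul_mem_Tri _ _).2 hx)

lemma costs_lt_of_dist_lt {c : ℂ → ℝ} (hC1 : C1 c) {x : ℂ} (hx : x ∈ Tri) {l m : Fin 3}
    (hm : m ≠ l) (h : dist x (Bin l) < dist x (Bin m)) : costs c l x < costs c m x := by
  -- (C1) at the rotated point `j^{-l} x`, which is closest to `B₁`
  have hcost := costs_add_jc_pow_mul c (-l) l x
  have hdist := dist_jc_pow_mul_Bin (-l) x l
  rw [add_neg_cancel] at hcost hdist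
  have hml : m + -l ≠ 0 := by rwa [← sub_eq_add_neg, sub_ne_zero]
  have := hC1 _ ((jc_pow_mul_mem_Tri (-l) x).2 hx) _ hml
  rw [hdist, dist_jc_pow_mul_Bin, hcost, costs_add_jc_pow_mul] at this
  exact this h

lemma Dl_eq_image (l : Fin 3) :
    ∃ w : ℂ, w ≠ 0 ∧ ∃ s : Set ℝ, MeasurableSet s ∧ Dl l = (fun t : ℝ => w * t) '' s := by
  have hw (n : ℕ) : Complex.I * jc ^ n ≠ 0 :=
    mul_ne_zero Complex.I_ne_zero (pow_ne_zero _ (isPrimitiveRoot_jc.ne_zero (by norm_num)))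
  fin_cases l
  · exact ⟨Complex.I * jc, by simpa using hw 1, Set.Iio 0, measurableSet_Iio,
      by ext; simp [Dl, eq_comm]⟩
  · exact ⟨_, hw 2, Set.Iic 0, measurableSet_Iic, by ext; simp [Dl, eq_comm]⟩
  · exact ⟨_, hw 3, Set.Iic 0, measurableSet_Iic, by ext; simp [Dl, eq_comm]⟩

lemma measurableSet_Dl (l : Fin 3) : MeasurableSet (Dl l) := by
  obtain ⟨w, hw, s, hs, h⟩ := Dl_eq_image l
  exact h ▸ measurableSet_image_mul_ofReal hw hs

lemma volume_Dl (l : Fin 3) : volume (Dl l) = 0 := by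
  obtain ⟨w, -, s, -, h⟩ := Dl_eq_image l
  exact h ▸ volume_image_mul_ofReal w s

lemma volume_dist_Bin_eq {l m : Fin 3} (h : l ≠ m) :
    volume {x : ℂ | dist x (Bin l) = dist x (Bin m)} = 0 := by
  have hne : AffineSubspace.perpBisector (Bin l) (Bin m) ≠ ⊤ := by
    rw [Ne, AffineSubspace.perpBisector_eq_top]
    exact Bin_injective.ne h
  have hset : {x : ℂ | dist x (Bin l) = dist x (Bin m)}
      = (AffineSubspace.perpBisector (Bin l) (Bin m) : Set ℂ) := by
    ext x
    simp [AffineSubspace.mem_perpBisector_iff_dist_eq]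
  exact hset ▸ Measure.addHaar_affineSubspace volume _ hne

lemma ae_notMem_Dl : ∀ᵐ x : ℂ, ∀ l, x ∉ Dl l :=
  ae_all_iff.2 fun l => measure_eq_zero_iff_ae_notMem.1 (volume_Dl l)

lemma ae_dist_Bin_ne : ∀ᵐ x : ℂ, ∀ l m : Fin 3, l ≠ m → dist x (Bin l) ≠ dist x (Bin m) :=
  ae_all_iff.2 fun l => ae_all_iff.2 fun m => by
    rcases eq_or_ne l m with rfl | h
    · exact ae_of_all _ fun _ h => (h rfl).elim
    · exact (measure_eq_zero_iff_ae_notMem.1 (volume_dist_Bin_eq h)).mono fun _ hx _ => hx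

def voronoi (l : Fin 3) : Set ℂ := {x ∈ Tri | dist x (Bin l) = ⨅ m : Fin 3, dist x (Bin m)}

lemma cell_subset_Tri (l : Fin 3) : cell l ⊆ Tri := fun _ hx => hx.1.1

lemma voronoi_eq_preimage (l : Fin 3) : voronoi l = (jc ^ (-l).val * ·) ⁻¹' voronoi 0 := by
  have hdist (x : ℂ) : dist (jc ^ (-l).val * x) (Bin 0) = dist x (Bin l) := by
    simpa using dist_jc_pow_mul_Bin (-l) x l
  ext x
  simp only [voronoi, Set.mem_preimage, Set.mem_ofPred_eq, jc_pow_mul_mem_Tri, hdist,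
    iInf_dist_jc_pow_mul_Bin]

lemma measurableSet_voronoi (l : Fin 3) : MeasurableSet (voronoi l) := by
  refine measurableSet_Tri.inter (measurableSet_eq_fun ?_ ?_)
  · exact measurable_id.dist measurable_const
  · exact Measurable.iInf fun m => measurable_id.dist measurable_const

lemma measurableSet_cell (l : Fin 3) : MeasurableSet (cell l) :=
  (measurableSet_voronoi l).diff (measurableSet_Dl l)

lemma cell_ae_eq_voronoi (l : Fin 3) : cell l =ᵐ[volume] voronoi l :=
  sdiff_ae_eq_self.2 (measure_mono_null Set.inter_subset_right (volume_Dl l))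

lemma exists_mem_cell {x : ℂ} (hx : x ∈ Tri) (hD : ∀ l, x ∉ Dl l) : ∃ l, x ∈ cell l := by
  obtain ⟨l, hl⟩ := exists_eq_ciInf_of_finite (f := fun m : Fin 3 => dist x (Bin m))
  exact ⟨l, ⟨hx, hl⟩, hD l⟩

lemma ae_exists_mem_cell : ∀ᵐ x ∂(volume.restrict Tri), ∃ l, x ∈ cell l := by
  filter_upwards [ae_restrict_mem measurableSet_Tri, ae_restrict_of_ae ae_notMem_Dl] with x hx hD
  exact exists_mem_cell hx hD

lemma setIntegral_cell_costs (c : ℂ → ℝ) (l : Fin 3) : ∫ x in cell l, costs c l x = gamma c := by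
  set R := rotation (Circle.exp (2 * Real.pi / 3) ^ (-l).val)
  have hR : ⇑R = (jc ^ (-l).val * ·) := by
    ext x
    rw [rotation_apply, Circle.coe_pow, ← jc_eq_circleExp]
  have hcost : costs c l = c ∘ R := by
    ext x
    simpa [hR, costs] using (costs_add_jc_pow_mul c (-l) l x).symm
  calc ∫ x in cell l, costs c l x = ∫ x in R ⁻¹' voronoi 0, c (R x) := by
        rw [setIntegral_congr_set (cell_ae_eq_voronoi l), voronoi_eq_preimage, ← hR, hcost]
        rfl
    _ = ∫ x in voronoi 0, c x :=
        R.measurePreserving.setIntegral_preimage_emb R.toHomeomorph.measurableEmbedding _ _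
    _ = gamma c := setIntegral_congr_set (cell_ae_eq_voronoi 0).symm

def minCost (c : ℂ → ℝ) (x : ℂ) : ℝ := Finset.univ.inf' Finset.univ_nonempty fun l => costs c l x

lemma minCost_le (c : ℂ → ℝ) (l : Fin 3) (x : ℂ) : minCost c x ≤ costs c l x :=
  Finset.inf'_le _ (Finset.mem_univ l)

lemma minCost_nonneg {c : ℂ → ℝ} (hc : ∀ x, 0 ≤ c x) (x : ℂ) : 0 ≤ minCost c x :=
  Finset.le_inf' _ _ fun l _ => costs_nonneg hc l x

lemma measurable_minCost {c : ℂ → ℝ} (hc : Measurable c) : Measurable (minCost c) := by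
  have : minCost c = Finset.univ.inf' Finset.univ_nonempty (costs c) := by
    ext x
    simp only [minCost, Finset.inf'_apply]
  rw [this]
  exact Finset.inf'_induction _ _ (fun _ hf _ hg => hf.inf hg) fun l _ => measurable_costs hc l

lemma minCost_eq_costs {c : ℂ → ℝ} (hC1 : C1 c) {x : ℂ} (hx : x ∈ Tri) {l : Fin 3}
    (h : ∀ m, m ≠ l → dist x (Bin l) < dist x (Bin m)) : minCost c x = costs c l x := by
  refine le_antisymm (minCost_le c l x) (Finset.le_inf' _ _ fun m _ => ?_)
  rcases eq_or_ne m l with rfl | hm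
  · exact le_rfl
  · exact (costs_lt_of_dist_lt hC1 hx hm (h m hm)).le

lemma minCost_eq_sum_indicator {c : ℂ → ℝ} (hC1 : C1 c) {x : ℂ} (hx : x ∈ Tri)
    (hD : ∀ l, x ∉ Dl l) (hties : ∀ l m : Fin 3, l ≠ m → dist x (Bin l) ≠ dist x (Bin m)) :
    minCost c x = ∑ l, (cell l).indicator (costs c l) x := by
  obtain ⟨l, hl⟩ := exists_eq_ciInf_of_finite (f := fun m : Fin 3 => dist x (Bin m))
  have hstrict (m : Fin 3) (hm : m ≠ l) : dist x (Bin l) < dist x (Bin m) :=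
    (hl ▸ ciInf_le (Finite.bddBelow_range _) m).lt_of_ne (hties l m hm.symm)
  have hnotMem (m : Fin 3) (hm : m ≠ l) : x ∉ cell m := fun hxm =>
    (hstrict m hm).not_ge (hxm.1.2 ▸ hl ▸ le_rfl)
  rw [Finset.sum_eq_single_of_mem l (Finset.mem_univ l)
      fun m _ hm => Set.indicator_of_notMem (hnotMem m hm) _,
    Set.indicator_of_mem (show x ∈ cell l from ⟨⟨hx, hl⟩, hD l⟩),
    minCost_eq_costs hC1 hx hstrict]

lemma integrable_of_norm_le_on_Tri {f : ℂ → ℝ} (hf : Measurable f) {M : ℝ}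
    (hM : ∀ x ∈ Tri, ‖f x‖ ≤ M) : Integrable f (volume.restrict Tri) :=
  Measure.integrableOn_of_bounded isCompact_Tri.measure_lt_top.ne hf.aestronglyMeasurable
    ((ae_restrict_mem measurableSet_Tri).mono hM)

lemma integrable_indicator_cell_costs {c : ℂ → ℝ} (hc_meas : Measurable c)
    (hc_nonneg : ∀ x, 0 ≤ c x) {M : ℝ} (hM : ∀ x ∈ Tri, c x ≤ M) (l : Fin 3) :
    Integrable ((cell l).indicator (costs c l)) (volume.restrict Tri) := by
  refine integrable_of_norm_le_on_Tri (M := M) ((measurable_costs hc_meas l).indicator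
    (measurableSet_cell l)) fun x hx => (norm_indicator_le_norm_self _ _).trans ?_
  rw [Real.norm_eq_abs, abs_of_nonneg (costs_nonneg hc_nonneg l x)]
  exact costs_le_of_mem_Tri hM l hx

lemma integrable_minCost {c : ℂ → ℝ} (hc_meas : Measurable c) (hc_nonneg : ∀ x, 0 ≤ c x)
    {M : ℝ} (hM : ∀ x ∈ Tri, c x ≤ M) : Integrable (minCost c) (volume.restrict Tri) := by
  refine integrable_of_norm_le_on_Tri (M := M) (measurable_minCost hc_meas) fun x hx => ?_
  rw [Real.norm_eq_abs, abs_of_nonneg (minCost_nonneg hc_nonneg x)]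
  exact (minCost_le c 0 x).trans (costs_le_of_mem_Tri hM 0 hx)

lemma integral_indicator_cell_costs (c : ℂ → ℝ) (l : Fin 3) :
    ∫ x, (cell l).indicator (costs c l) x ∂(volume.restrict Tri) = gamma c := by
  rw [integral_indicator (measurableSet_cell l), Measure.restrict_restrict (measurableSet_cell l),
    Set.inter_eq_self_of_subset_left (cell_subset_Tri l), setIntegral_cell_costs]

lemma integral_minCost {c : ℂ → ℝ} (hC1 : C1 c) (hc_meas : Measurable c)
    (hc_nonneg : ∀ x, 0 ≤ c x) {M : ℝ} (hM : ∀ x ∈ Tri, c x ≤ M) :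
    ∫ x, minCost c x ∂(volume.restrict Tri) = 3 * gamma c := by
  have hae : minCost c =ᵐ[volume.restrict Tri] fun x => ∑ l, (cell l).indicator (costs c l) x := by
    filter_upwards [ae_restrict_mem measurableSet_Tri, ae_restrict_of_ae ae_notMem_Dl,
      ae_restrict_of_ae ae_dist_Bin_ne] with x hx hD hties
    exact minCost_eq_sum_indicator hC1 hx hD hties
  rw [integral_congr_ae hae, integral_finsetSum _
    fun l _ => integrable_indicator_cell_costs hc_meas hc_nonneg hM l]
  simp [integral_indicator_cell_costs]

lemma sum_minCost_le_three_mul_load (c : ℂ → ℝ) {n : ℕ} (x : Fin n → ℂ) (A : Fin n → Fin 3) :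
    ∑ k, minCost c (x k) ≤ 3 * load c x A :=
  calc ∑ k, minCost c (x k)
      ≤ ∑ k, costs c (A k) (x k) := Finset.sum_le_sum fun k _ => minCost_le c (A k) (x k)
    _ = ∑ l, ∑ k, if A k = l then costs c l (x k) else 0 := by
        rw [Finset.sum_comm]
        simp
    _ ≤ ∑ _l : Fin 3, load c x A :=
        Finset.sum_le_sum fun l _ => Finset.le_sup'
          (fun l => ∑ k, if A k = l then costs c l (x k) else 0) (Finset.mem_univ l)
    _ = 3 * load c x A := by simp

lemma sum_minCost_div_three_le_optLoad (c : ℂ → ℝ) {n : ℕ} (x : Fin n → ℂ) :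
    (∑ k, minCost c (x k)) / 3 ≤ optLoad c x :=
  Finset.le_inf' _ _ fun A _ => by
    linarith [sum_minCost_le_three_mul_load c x A]

lemma optLoad_le_subLoad {c : ℂ → ℝ} (hc : ∀ x, 0 ≤ c x) {n : ℕ} (x : Fin n → ℂ)
    (hx : ∀ k, ∃ l, x k ∈ cell l) : optLoad c x ≤ subLoad c x := by
  choose A hA using hx
  refine (Finset.inf'_le _ (Finset.mem_univ A)).trans
    (Finset.sup'_mono_fun fun l _ => Finset.sum_le_sum fun k _ => ?_)
  split_ifs with h
  · exact (Set.indicator_of_mem (h ▸ hA k) _).ge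
  · exact Set.indicator_nonneg (fun y _ => costs_nonneg hc l y) _

lemma tendsto_subLoad_div {c : ℂ → ℝ} {y : ℕ → ℂ} {a : ℝ}
    (h : ∀ l, Tendsto (fun n : ℕ => (∑ k : Fin n, (cell l).indicator (costs c l) (y k)) / n)
      atTop (𝓝 a)) :
    Tendsto (fun n : ℕ => subLoad c (fun k : Fin n => y k) / n) atTop (𝓝 a) := by
  have hdiv (n : ℕ) : subLoad c (fun k : Fin n => y k) / n = Finset.univ.sup' Finset.univ_nonempty
      fun l => (∑ k : Fin n, (cell l).indicator (costs c l) (y k)) / n :=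
    Finset.sup'_div₀ n.cast_nonneg _ _ _
  simp_rw [hdiv]
  simpa using Tendsto.finset_sup'_nhds_apply Finset.univ_nonempty fun l _ => h l

theorem lln_optimal_and_suboptimal_load_general
    (c : ℂ → ℝ) (hc_meas : Measurable c) (hc_nonneg : ∀ x, 0 ≤ c x)
    (hc_bdd : BddAbove (c '' Tri))
    (hC1 : C1 c)
    {Ω : Type*} [MeasurableSpace Ω] (P : Measure Ω)
    (X : ℕ → Ω → ℂ) (hX_meas : ∀ k, Measurable (X k))
    (hX_law : ∀ k, Measure.map (X k) P = volume.restrict Tri)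
    (hX_indep : ProbabilityTheory.iIndepFun X P) :
    ∀ᵐ ω ∂P,
      Tendsto (fun n : ℕ => optLoad c (fun k : Fin n => X k ω) / n) atTop (nhds (gamma c)) ∧
      Tendsto (fun n : ℕ => subLoad c (fun k : Fin n => X k ω) / n) atTop (nhds (gamma c)) := by
  obtain ⟨M, hM⟩ := hc_bdd
  have hcM : ∀ x ∈ Tri, c x ≤ M := fun x hx => hM ⟨x, hx, rfl⟩
  have slln {f : ℂ → ℝ} (hf : Measurable f) (hfi : Integrable f (volume.restrict Tri)) :=
    ae_tendsto_sum_div_of_map_eq hX_meas hX_law (fun i j hij => hX_indep.indepFun hij) hf hfi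
  filter_upwards [ae_all_iff.2 fun l => slln ((measurable_costs hc_meas l).indicator
      (measurableSet_cell l)) (integrable_indicator_cell_costs hc_meas hc_nonneg hcM l),
    slln (measurable_minCost hc_meas) (integrable_minCost hc_meas hc_nonneg hcM),
    ae_forall_of_map_eq hX_meas hX_law ae_exists_mem_cell] with ω hcell hmin hmem
  simp only [integral_indicator_cell_costs] at hcell
  rw [integral_minCost hC1 hc_meas hc_nonneg hcM] at hmin
  have hsub := tendsto_subLoad_div (y := fun k => X k ω) hcell
  have hlow : Tendsto (fun n : ℕ => (∑ k : Fin n, minCost c (X k ω)) / 3 / n) atTop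
      (𝓝 (gamma c)) := by
    convert hmin.div_const 3 using 2 with n
    · exact div_right_comm _ _ _
    · ring
  refine ⟨tendsto_of_tendsto_of_tendsto_of_le_of_le hlow hsub (fun n => ?_) (fun n => ?_), hsub⟩
  · exact div_le_div_of_nonneg_right (sum_minCost_div_three_le_optLoad c _) n.cast_nonneg
  · exact div_le_div_of_nonneg_right (optLoad_le_subLoad hc_nonneg _ fun k => hmem k)
      n.cast_nonneg

/-- **Law of large numbers for the optimal and suboptimal loads** (Theorem 1.1):
under assumption (C1), almost surely `ρₙ/n → γ` and `ρ̄ₙ/n → γ`. -/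
theorem lln_optimal_and_suboptimal_load
    (c : ℂ → ℝ) (hc_meas : Measurable c) (hc_nonneg : ∀ x, 0 ≤ c x)
    (hc_bdd : BddAbove (c '' Tri))
    (hC1 : C1 c)
    {Ω : Type*} [MeasurableSpace Ω] (P : Measure Ω) [IsProbabilityMeasure P]
    (X : ℕ → Ω → ℂ) (hX_meas : ∀ k, Measurable (X k))
    (hX_law : ∀ k, Measure.map (X k) P = volume.restrict Tri)
    (hX_indep : ProbabilityTheory.iIndepFun X P) :
    ∀ᵐ ω ∂P,
      Tendsto (fun n : ℕ => optLoad c (fun k : Fin n => X k ω) / n) atTop (nhds (gamma c)) ∧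
      Tendsto (fun n : ℕ => subLoad c (fun k : Fin n => X k ω) / n) atTop (nhds (gamma c)) :=
  lln_optimal_and_suboptimal_load_general c hc_meas hc_nonneg hc_bdd hC1 P X hX_meas hX_law hX_indep

end LoadOpt
end
end

section
/- Strict comparison of the rate functions above the mean: assume (C1), (C5), that c is continuous at 0 and at B₁, and that c is not ℓ-a.e. constant on 𝕋₁. Then for every y with γ < y < c(0)/3, one has Λ̄*(y) < Λ*(3y). -/
open MeasureTheory Filter Asymptotics

noncomputable section

namespace LoadOpt

/-- `Λ(θ) = log (3 ∫_{𝕋₁} e^{θ c})`. -/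
def Lambda (c : ℂ → ℝ) (θ : ℝ) : ℝ := Real.log (3 * ∫ x in cell 0, Real.exp (θ * c x))

/-- The Fenchel–Legendre transform `Λ*`. -/
def LambdaStar (c : ℂ → ℝ) (y : ℝ) : EReal := ⨆ θ : ℝ, ((θ * y - Lambda c θ : ℝ) : EReal)

/-- `Λ̄(θ) = log (∫_{𝕋₁} e^{θ c} + 2/3)`. -/
def LambdaBar (c : ℂ → ℝ) (θ : ℝ) : ℝ :=
  Real.log ((∫ x in cell 0, Real.exp (θ * c x)) + 2 / 3)

/-- The Fenchel–Legendre transform `Λ̄*`. -/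
def LambdaBarStar (c : ℂ → ℝ) (y : ℝ) : EReal := ⨆ θ : ℝ, ((θ * y - LambdaBar c θ : ℝ) : EReal)

/-- Assumption (C5): `c(B₁) < c(x) < c(0)` on `𝕋₁ \ {0, B₁}`. -/
def C5 (c : ℂ → ℝ) : Prop :=
  ∀ x ∈ cell 0, x ≠ 0 → x ≠ Bin 0 → c (Bin 0) < c x ∧ c x < c 0

/-!
Since `3Z ≤ (Z + 2/3)³` for `Z > 0` (AM–GM for `Z, 1/3, 1/3`), `Λ ≤ 3 Λ̄` pointwise, hence
`Λ̄*(y) ≤ Λ*(3y) / 3`. It therefore suffices that `Λ*(3y) > 0` and `Λ̄*(y) < ∞`.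
For the first, `ℓ(𝕋₁) ≤ 1/3` and `e^t ≤ 1 + t e^{θM}` for `0 ≤ t ≤ θM` give
`Λ(θ) ≤ 3θ e^{θM} γ` for `θ ≥ 0`, where `M` bounds `c`; this is `< 3θy` for small `θ > 0`
because `γ < y`. For the second, continuity at `0` makes `c > y` on a neighbourhood of `0` in
`𝕋₁`, which has positive measure, so `θy - Λ̄(θ)` stays bounded as `θ → ∞`.
-/

end LoadOpt

open Set Real Topology MeasureTheory

theorem log_three_mul_le_three_mul_log_add {Z : ℝ} (hZ : 0 < Z) :
    log (3 * Z) ≤ 3 * log (Z + 2 / 3) := by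
  have amgm : 3 * Z ≤ (Z + 2 / 3) ^ 3 := by nlinarith [sq_nonneg (Z - 1 / 3)]
  simpa [Real.log_pow] using Real.log_le_log (by positivity) amgm

theorem iSup_coe_lt_iSup_coe_of_mul_le {ι : Type*} {f g : ι → ℝ} {k : ℝ} (hk : 1 < k)
    (hgf : ∀ i, k * g i ≤ f i) (hg : BddAbove (range g)) (hf : ∃ i, 0 < f i) :
    ⨆ i, (g i : EReal) < ⨆ i, (f i : EReal) := by
  obtain ⟨i₀, hi₀⟩ := hf
  obtain ⟨B, hB⟩ := hg
  have hf_le : ∀ i, (f i : EReal) ≤ ⨆ j, (f j : EReal) := le_iSup (fun j => (f j : EReal))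
  induction h : ⨆ j, (f j : EReal) using EReal.rec with
  | bot => exact absurd (h ▸ hf_le i₀) (EReal.coe_ne_bot _ ∘ le_bot_iff.1)
  | coe s =>
    rw [h] at hf_le
    have hs : 0 < s := hi₀.trans_le (EReal.coe_le_coe_iff.1 (hf_le i₀))
    calc ⨆ i, (g i : EReal) ≤ ((s / k : ℝ) : EReal) :=
          iSup_le fun i => EReal.coe_le_coe_iff.2 <| by
            rw [le_div_iff₀ (by linarith)]
            linarith [hgf i, EReal.coe_le_coe_iff.1 (hf_le i)]
      _ < s := EReal.coe_lt_coe_iff.2 (div_lt_self hs hk)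
  | top =>
    exact (iSup_le fun i => EReal.coe_le_coe_iff.2 (hB (mem_range_self i))).trans_lt
      (EReal.coe_lt_top B)

theorem exp_le_one_add_mul_exp {t s : ℝ} (ht : 0 ≤ t) (hts : t ≤ s) :
    exp t ≤ 1 + t * exp s := by
  have h : (1 - t) * exp t ≤ 1 := by
    simpa [← exp_add] using mul_le_mul_of_nonneg_right (one_sub_le_exp_neg t) (exp_pos t).le
  nlinarith [mul_le_mul_of_nonneg_left (exp_le_exp.2 hts) ht]

section ExponentialMoments

variable {α : Type*} [MeasurableSpace α] {μ : Measure α} [IsFiniteMeasure μ] {f : α → ℝ}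
  {M : ℝ}

theorem integrable_exp_mul_of_ae_mem_Icc (hf : AEStronglyMeasurable f μ)
    (hfM : ∀ᵐ x ∂μ, f x ∈ Icc 0 M) (θ : ℝ) : Integrable (fun x => exp (θ * f x)) μ := by
  refine Integrable.of_bound (by fun_prop) (exp (|θ| * M)) (hfM.mono fun x hx => ?_)
  rw [norm_of_nonneg (exp_pos _).le, exp_le_exp]
  calc θ * f x ≤ |θ| * f x := mul_le_mul_of_nonneg_right (le_abs_self θ) hx.1
    _ ≤ |θ| * M := mul_le_mul_of_nonneg_left hx.2 (abs_nonneg θ)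

theorem integral_exp_mul_le (hf_meas : AEStronglyMeasurable f μ)
    (hfM : ∀ᵐ x ∂μ, f x ∈ Icc 0 M) {θ : ℝ} (hθ : 0 ≤ θ) :
    ∫ x, exp (θ * f x) ∂μ ≤ μ.real univ + θ * exp (θ * M) * ∫ x, f x ∂μ := by
  have hint := integrable_exp_mul_of_ae_mem_Icc hf_meas hfM θ
  have hf : Integrable f μ :=
    .of_bound hf_meas M (hfM.mono fun x hx => (norm_of_nonneg hx.1).trans_le hx.2)
  calc ∫ x, exp (θ * f x) ∂μ ≤ ∫ x, (1 + θ * exp (θ * M) * f x) ∂μ :=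
        integral_mono_ae hint ((integrable_const 1).add (hf.const_mul _)) <| hfM.mono fun x hx =>
          (exp_le_one_add_mul_exp (mul_nonneg hθ hx.1)
            (mul_le_mul_of_nonneg_left hx.2 hθ)).trans_eq (by ring)
    _ = μ.real univ + θ * exp (θ * M) * ∫ x, f x ∂μ := by
        rw [integral_add (integrable_const 1) (hf.const_mul _), integral_const, integral_const_mul,
          smul_eq_mul, mul_one]

theorem exists_log_mul_integral_exp_lt [NeZero μ] (hf : AEStronglyMeasurable f μ)
    (hfM : ∀ᵐ x ∂μ, f x ∈ Icc 0 M) {k y : ℝ} (hk : 0 < k) (hμ : k * μ.real univ ≤ 1)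
    (hy : ∫ x, f x ∂μ < y) : ∃ θ, log (k * ∫ x, exp (θ * f x) ∂μ) < θ * (k * y) := by
  have hlim : Tendsto (fun θ => (∫ x, f x ∂μ) * exp (θ * M)) (𝓝[>] 0) (𝓝 (∫ x, f x ∂μ)) :=
    ((by fun_prop : Continuous fun θ => (∫ x, f x ∂μ) * exp (θ * M)).tendsto' 0 _
      (by simp)).mono_left nhdsWithin_le_nhds
  obtain ⟨θ, hθy, hθ⟩ := ((hlim.eventually (gt_mem_nhds hy)).and self_mem_nhdsWithin).exists
  have hZ : 0 < ∫ x, exp (θ * f x) ∂μ :=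
    integral_exp_pos (integrable_exp_mul_of_ae_mem_Icc hf hfM θ)
  refine ⟨θ, ?_⟩
  calc log (k * ∫ x, exp (θ * f x) ∂μ) ≤ k * ∫ x, exp (θ * f x) ∂μ - 1 :=
        log_le_sub_one_of_pos (by positivity)
    _ ≤ k * (μ.real univ + θ * exp (θ * M) * ∫ x, f x ∂μ) - 1 := by
        gcongr; exact integral_exp_mul_le hf hfM (le_of_lt hθ)
    _ ≤ θ * (k * ((∫ x, f x ∂μ) * exp (θ * M))) := by nlinarith
    _ < θ * (k * y) := by gcongr

theorem bddAbove_range_mul_sub_log_integral_exp_add (hf : AEStronglyMeasurable f μ)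
    (hfM : ∀ᵐ x ∂μ, f x ∈ Icc 0 M) {A : Set α} (hA : μ A ≠ 0) {y b : ℝ} (hy : 0 ≤ y)
    (hb : 0 < b) (hyA : ∀ᵐ x ∂μ.restrict A, y ≤ f x) :
    BddAbove (range fun θ => θ * y - log ((∫ x, exp (θ * f x) ∂μ) + b)) := by
  have hint := integrable_exp_mul_of_ae_mem_Icc hf hfM
  have hA_pos : 0 < μ.real A := ENNReal.toReal_pos hA (measure_ne_top μ A)
  refine ⟨max (-log (μ.real A)) (-log b), forall_mem_range.2 fun θ => ?_⟩
  have hZ : 0 ≤ ∫ x, exp (θ * f x) ∂μ := integral_nonneg fun x => (exp_pos _).le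
  rcases le_or_gt 0 θ with hθ | hθ
  · have hlow : exp (θ * y) * μ.real A ≤ ∫ x, exp (θ * f x) ∂μ + b := by
      calc exp (θ * y) * μ.real A = ∫ x in A, exp (θ * y) ∂μ := by
            rw [setIntegral_const, smul_eq_mul, mul_comm]
        _ ≤ ∫ x in A, exp (θ * f x) ∂μ :=
            integral_mono_ae (integrable_const _) (hint θ).restrict <|
              hyA.mono fun x hx => exp_le_exp.2 (mul_le_mul_of_nonneg_left hx hθ)
        _ ≤ ∫ x, exp (θ * f x) ∂μ :=
            setIntegral_le_integral (hint θ) (ae_of_all _ fun x => (exp_pos _).le)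
        _ ≤ _ := by linarith
    have := log_le_log (by positivity) hlow
    rw [log_mul (exp_pos _).ne' hA_pos.ne', log_exp] at this
    exact le_max_of_le_left (by linarith)
  · have := log_le_log hb (by linarith : b ≤ ∫ x, exp (θ * f x) ∂μ + b)
    exact le_max_of_le_right (by nlinarith)

end ExponentialMoments

theorem integral_const_add_const_mul_id (p q a b : ℝ) :
    ∫ x in a..b, (p + q * x) = p * (b - a) + q * (b ^ 2 - a ^ 2) / 2 := by
  rw [intervalIntegral.integral_add intervalIntegrable_const
      ((continuous_const_mul q).intervalIntegrable a b),
    intervalIntegral.integral_const_mul, integral_id, intervalIntegral.integral_const, smul_eq_mul]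
  ring

theorem volume_region_between_cc_eq_integral {f g : ℝ → ℝ} {a b : ℝ} (hab : a ≤ b)
    (hf : Continuous f) (hg : Continuous g) (hfg : ∀ x ∈ Icc a b, f x ≤ g x) :
    volume {p : ℝ × ℝ | p.1 ∈ Icc a b ∧ p.2 ∈ Icc (f p.1) (g p.1)}
      = ENNReal.ofReal (∫ x in a..b, (g x - f x)) := by
  set S := {p : ℝ × ℝ | p.1 ∈ Icc a b ∧ p.2 ∈ Icc (f p.1) (g p.1)}
  have hfiber (x : ℝ) :
      volume (Prod.mk x ⁻¹' S) = (Icc a b).indicator (fun x => ENNReal.ofReal (g x - f x)) x := by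
    by_cases hx : x ∈ Icc a b
    · rw [show Prod.mk x ⁻¹' S = Icc (f x) (g x) from ext fun y => and_iff_right hx,
        Real.volume_Icc, indicator_of_mem hx]
    · rw [show Prod.mk x ⁻¹' S = ∅ from eq_empty_of_forall_notMem fun y hy => hx hy.1,
        measure_empty, indicator_of_notMem hx]
  rw [Measure.volume_eq_prod, Measure.prod_apply (measurableSet_region_between_cc hf.measurable
      hg.measurable measurableSet_Icc), lintegral_congr hfiber,
    lintegral_indicator measurableSet_Icc,
    ← ofReal_integral_eq_lintegral_ofReal (f := fun x => g x - f x) (hg.sub hf).integrableOn_Icc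
      (ae_restrict_of_forall_mem measurableSet_Icc fun x hx => sub_nonneg.2 (hfg x hx)),
    integral_Icc_eq_integral_Ioc, ← intervalIntegral.integral_of_le hab]

theorem Complex.sq_dist_eq_re_im (z w : ℂ) :
    dist z w ^ 2 = (z.re - w.re) ^ 2 + (z.im - w.im) ^ 2 := by
  rw [Complex.dist_eq_re_im, sq_sqrt (by positivity)]

theorem eq_ciInf_iff_forall_le {ι α : Type*} [Finite ι] [ConditionallyCompleteLinearOrder α]
    {f : ι → α} {i : ι} : f i = ⨅ j, f j ↔ ∀ j, f i ≤ f j :=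
  ⟨fun h j => h ▸ ciInf_le (finite_range f).bddBelow j,
    fun h => have : Nonempty ι := ⟨i⟩
      le_antisymm (le_ciInf h) (ciInf_le (finite_range f).bddBelow i)⟩

theorem sq_sqrt_three : √3 ^ 2 = 3 := sq_sqrt (by norm_num)

namespace LoadOpt

theorem lam_pos : 0 < lam := by unfold lam; positivity

theorem sqrt_three_mul_lam_sq : √3 * lam ^ 2 = 4 / 3 := by
  have h : (0 : ℝ) ≤ 3 * √3 := by positivity
  rw [lam, div_pow, sq_sqrt h]
  field_simp
  ring

theorem jc_eq : jc = ⟨-(1 / 2), √3 / 2⟩ := by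
  have h : 2 * (π : ℂ) * Complex.I / 3 = ((π - π / 3 : ℝ) : ℂ) * Complex.I := by push_cast; ring
  apply Complex.ext
  · rw [jc, h, Complex.exp_ofReal_mul_I_re, cos_pi_sub, cos_pi_div_three]
  · rw [jc, h, Complex.exp_ofReal_mul_I_im, sin_pi_sub, sin_pi_div_three]

theorem Bin_zero : Bin 0 = ⟨√3 * lam / 2, -(lam / 2)⟩ := by
  have := sq_sqrt_three
  apply Complex.ext <;>
    simp only [Bin, Matrix.cons_val, jc_eq, sq, Complex.mul_re, Complex.mul_im,
      Complex.ofReal_re, Complex.ofReal_im, Complex.I_re, Complex.I_im]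
  · ring
  · linear_combination (-(lam / 4)) * this

theorem Bin_one : Bin 1 = ⟨0, lam⟩ := by
  apply Complex.ext <;> simp [Bin]

theorem Bin_two : Bin 2 = ⟨-(√3 * lam / 2), -(lam / 2)⟩ := by
  apply Complex.ext <;>
    simp only [Bin, Matrix.cons_val, jc_eq, Complex.mul_re, Complex.mul_im,
      Complex.ofReal_re, Complex.ofReal_im, Complex.I_re, Complex.I_im] <;>
    ring

theorem dist_Bin_zero_le_dist_Bin_one_iff (z : ℂ) :
    dist z (Bin 0) ≤ dist z (Bin 1) ↔ √3 * z.im ≤ z.re := by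
  have h3 := sq_sqrt_three
  have key : dist z (Bin 1) ^ 2 - dist z (Bin 0) ^ 2 = √3 * lam * (z.re - √3 * z.im) := by
    rw [Complex.sq_dist_eq_re_im, Complex.sq_dist_eq_re_im, Bin_zero, Bin_one]
    linear_combination (lam * z.im - lam ^ 2 / 4) * h3
  rw [← sq_le_sq₀ dist_nonneg dist_nonneg, ← sub_nonneg, key,
    mul_nonneg_iff_of_pos_left (by have := lam_pos; positivity), sub_nonneg]

theorem dist_Bin_zero_le_dist_Bin_two_iff (z : ℂ) :
    dist z (Bin 0) ≤ dist z (Bin 2) ↔ 0 ≤ z.re := by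
  have key : dist z (Bin 2) ^ 2 - dist z (Bin 0) ^ 2 = 2 * √3 * lam * z.re := by
    rw [Complex.sq_dist_eq_re_im, Complex.sq_dist_eq_re_im, Bin_zero, Bin_two]
    ring
  rw [← sq_le_sq₀ dist_nonneg dist_nonneg, ← sub_nonneg, key,
    mul_nonneg_iff_of_pos_left (by have := lam_pos; positivity)]

theorem Dl_zero_eq : Dl 0 = {z | 0 < z.im ∧ z.re = √3 * z.im} := by
  have hIjc : Complex.I * jc = ⟨-(√3 / 2), -(1 / 2)⟩ := by
    rw [jc_eq]
    apply Complex.ext <;> simp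
  ext z
  simp only [Dl, Matrix.cons_val_zero, mem_ofPred_eq, hIjc]
  constructor
  · rintro ⟨t, ht, rfl⟩
    rw [Complex.re_mul_ofReal, Complex.im_mul_ofReal]
    exact ⟨by linarith, by ring⟩
  · rintro ⟨him, hre⟩
    refine ⟨-2 * z.im, by linarith, Complex.ext ?_ ?_⟩
    · rw [Complex.re_mul_ofReal, hre]
      ring
    · rw [Complex.im_mul_ofReal]
      ring

theorem cell_zero_eq :
    cell 0 = Tri ∩ {z | √3 * z.im ≤ z.re ∧ 0 ≤ z.re ∧ ¬(0 < z.im ∧ z.re = √3 * z.im)} := by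
  ext z
  have hmin : dist z (Bin 0) = ⨅ m, dist z (Bin m) ↔ ∀ m, dist z (Bin 0) ≤ dist z (Bin m) :=
    eq_ciInf_iff_forall_le (f := fun m => dist z (Bin m))
  simp only [cell, Dl_zero_eq, Set.mem_sdiff, mem_inter_iff, mem_ofPred_eq, hmin,
    ← dist_Bin_zero_le_dist_Bin_one_iff, ← dist_Bin_zero_le_dist_Bin_two_iff]
  constructor
  · rintro ⟨⟨hT, h⟩, hD⟩
    exact ⟨hT, h 1, h 2, hD⟩
  · rintro ⟨hT, h1, h2, hD⟩
    refine ⟨⟨hT, fun j => ?_⟩, hD⟩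
    fin_cases j
    exacts [le_rfl, h1, h2]

theorem isClosed_Tri : IsClosed Tri :=
  (((finite_singleton _).insert _).insert _).isCompact_convexHull (𝕜 := ℝ) |>.isClosed

theorem Tri_subset_halfplane {a b r : ℝ} (h0 : a * (√3 * lam / 2) + b * -(lam / 2) ≤ r)
    (h1 : a * 0 + b * lam ≤ r) (h2 : a * -(√3 * lam / 2) + b * -(lam / 2) ≤ r) :
    Tri ⊆ {z | a * z.re + b * z.im ≤ r} := by
  refine convexHull_min ?_ (convex_halfSpace_le (𝕜 := ℝ) ⟨fun z w => ?_, fun t z => ?_⟩ r)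
  · rintro _ (rfl | rfl | rfl)
    · rwa [mem_ofPred_eq, Bin_zero]
    · rwa [mem_ofPred_eq, Bin_one]
    · rwa [mem_ofPred_eq, Bin_two]
  · simp only [Complex.add_re, Complex.add_im]
    ring
  · simp only [Complex.smul_re, Complex.smul_im, smul_eq_mul]
    ring

theorem ball_subset_Tri : Metric.ball (0 : ℂ) (lam / 2) ⊆ Tri := by
  intro z hz
  have hlam := lam_pos
  have h3 := sq_sqrt_three
  have hz2 : z.re ^ 2 + z.im ^ 2 < (lam / 2) ^ 2 := by
    have := Complex.sq_dist_eq_re_im z 0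
    simp only [Complex.zero_re, Complex.zero_im, sub_zero] at this
    rw [← this]
    exact pow_lt_pow_left₀ hz dist_nonneg two_ne_zero
  -- barycentric coordinates of `z`
  let d : Fin 3 → ℝ := ![√3 * z.re - z.im, 2 * z.im, -(√3 * z.re + z.im)]
  let w : Fin 3 → ℝ := fun i => (lam + d i) / (3 * lam)
  have hw : ∑ i, w i • Bin i = z := by
    apply Complex.ext <;>
      simp only [Fin.sum_univ_three, Complex.add_re, Complex.add_im, Complex.smul_re,
        Complex.smul_im, smul_eq_mul, w, d, Matrix.cons_val_zero, Matrix.cons_val_one,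
        Matrix.cons_val_two, Matrix.tail_cons, Matrix.head_cons, Bin_zero, Bin_one, Bin_two] <;>
      field_simp
    · linear_combination (2 * lam * z.re) * h3
    · ring
  rw [← hw]
  refine (convex_convexHull ℝ _).sum_mem (fun i _ => div_nonneg ?_ (by positivity)) ?_
    (fun i _ => subset_convexHull ℝ _ ?_)
  · have hd (a b : ℝ) (hab : a ^ 2 + b ^ 2 = 1) : -lam ≤ 2 * (a * z.re + b * z.im) := by
      nlinarith [sq_nonneg (a * z.im - b * z.re), sq_nonneg (2 * (a * z.re + b * z.im) + lam)]
    fin_cases i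
    · show 0 ≤ lam + (√3 * z.re - z.im)
      linarith [hd (√3 / 2) (-(1 / 2)) (by linear_combination h3 / 4)]
    · show 0 ≤ lam + 2 * z.im
      linarith [hd 0 1 (by norm_num)]
    · show 0 ≤ lam + -(√3 * z.re + z.im)
      linarith [hd (-(√3 / 2)) (-(1 / 2)) (by linear_combination h3 / 4)]
  · simp only [Fin.sum_univ_three, w, d, Matrix.cons_val_zero, Matrix.cons_val_one,
      Matrix.cons_val_two, Matrix.tail_cons, Matrix.head_cons]
    field_simp
    ring
  · fin_cases i <;> simp

theorem measurableSet_cell_zero : MeasurableSet (cell 0) := by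
  rw [cell_zero_eq]
  exact isClosed_Tri.measurableSet.inter (by measurability)

theorem volume_left_slab :
    volume {p : ℝ × ℝ | p.1 ∈ Icc 0 (√3 * lam / 4) ∧ p.2 ∈ Icc (-(lam / 2)) (p.1 / √3)}
      = ENNReal.ofReal (5 * (√3 * lam ^ 2) / 32) := by
  have hs3 : 0 < √3 := by positivity
  refine (volume_region_between_cc_eq_integral (f := fun _ => -(lam / 2))
    (g := fun x => x / √3) (by have := lam_pos; positivity) (by fun_prop) (by fun_prop)
    fun x hx => by have := div_nonneg hx.1 hs3.le; linarith [lam_pos]).trans (congrArg _ ?_)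
  calc ∫ x in (0)..√3 * lam / 4, (x / √3 - -(lam / 2))
      = ∫ x in (0)..√3 * lam / 4, (lam / 2 + (√3)⁻¹ * x) := by
        congr 1; ext x; ring
    _ = _ := by rw [integral_const_add_const_mul_id]; field_simp; ring

theorem volume_right_slab :
    volume {p : ℝ × ℝ | p.1 ∈ Icc (√3 * lam / 4) (√3 * lam / 2) ∧
      p.2 ∈ Icc (-(lam / 2)) (lam - √3 * p.1)} = ENNReal.ofReal (3 * (√3 * lam ^ 2) / 32) := by
  have hlam := lam_pos
  have hs3 : 0 < √3 := by positivity
  have h3 := sq_sqrt_three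
  refine (volume_region_between_cc_eq_integral (f := fun _ => -(lam / 2))
    (g := fun x => lam - √3 * x) (by linarith [mul_pos hs3 hlam]) (by fun_prop) (by fun_prop)
    fun x hx => ?_).trans (congrArg _ ?_)
  · nlinarith [mul_le_mul_of_nonneg_left hx.2 hs3.le]
  calc ∫ x in √3 * lam / 4..√3 * lam / 2, (lam - √3 * x - -(lam / 2))
      = ∫ x in √3 * lam / 4..√3 * lam / 2, (3 * lam / 2 + -√3 * x) := by
        congr 1; ext x; ring
    _ = _ := by
        rw [integral_const_add_const_mul_id]
        linear_combination (-(3 / 32 * lam ^ 2 * √3)) * h3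

theorem volume_cell_zero_le : volume (cell 0) ≤ ENNReal.ofReal (1 / 3) := by
  have hlam := lam_pos
  have h3 := sq_sqrt_three
  have hs3 : 0 < √3 := by positivity
  -- the cell is the quadrilateral with vertices `0`, `-iλ/2`, `B₁` and `(B₁ + B₂) / 2`,
  -- cut by the vertical line through its last vertex
  let SA : Set (ℝ × ℝ) := {p | p.1 ∈ Icc 0 (√3 * lam / 4) ∧ p.2 ∈ Icc (-(lam / 2)) (p.1 / √3)}
  let SB : Set (ℝ × ℝ) :=
    {p | p.1 ∈ Icc (√3 * lam / 4) (√3 * lam / 2) ∧ p.2 ∈ Icc (-(lam / 2)) (lam - √3 * p.1)}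
  have hsub : cell 0 ⊆ Complex.measurableEquivRealProd ⁻¹' (SA ∪ SB) := by
    rw [cell_zero_eq]
    rintro z ⟨hT, h1, h2, -⟩
    have hlow : 0 * z.re + -1 * z.im ≤ lam / 2 :=
      Tri_subset_halfplane (by linarith) (by linarith) (by linarith) hT
    have hup : √3 * z.re + 1 * z.im ≤ lam :=
      Tri_subset_halfplane (by nlinarith) (by linarith) (by nlinarith [mul_pos hs3 hlam]) hT
    simp only [mem_preimage, Complex.measurableEquivRealProd_apply, mem_union, mem_ofPred_eq,
      mem_Icc, SA, SB]
    rcases le_total z.re (√3 * lam / 4) with h | h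
    · exact Or.inl ⟨⟨h2, h⟩, by linarith, (le_div_iff₀ hs3).2 (by linarith)⟩
    · refine Or.inr ⟨⟨h, ?_⟩, by linarith, by linarith⟩
      nlinarith [mul_le_mul_of_nonneg_left (by linarith : √3 * z.re ≤ 3 * lam / 2) hs3.le]
  have hmeas : MeasurableSet (SA ∪ SB) :=
    (measurableSet_region_between_cc (f := fun _ => -(lam / 2)) (g := fun x => x / √3)
      measurable_const (by fun_prop) measurableSet_Icc).union
    (measurableSet_region_between_cc (f := fun _ => -(lam / 2)) (g := fun x => lam - √3 * x)
      measurable_const (by fun_prop) measurableSet_Icc)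
  calc volume (cell 0) ≤ volume (SA ∪ SB) := (measure_mono hsub).trans_eq
        (Complex.volume_preserving_equiv_real_prod.measure_preimage hmeas.nullMeasurableSet)
    _ ≤ volume SA + volume SB := measure_union_le _ _
    _ = ENNReal.ofReal (1 / 3) := by
        rw [volume_left_slab, volume_right_slab, ← ENNReal.ofReal_add (by positivity)
          (by positivity)]
        congr 1
        linarith [sqrt_three_mul_lam_sq]

theorem volume_cell_zero_inter_ball_pos {δ : ℝ} (hδ : 0 < δ) :
    0 < volume (cell 0 ∩ Metric.ball 0 δ) := by
  set r := min δ (lam / 2)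
  have hr : 0 < r := lt_min hδ (half_pos lam_pos)
  let U : Set ℂ := Metric.ball 0 r ∩ {z | √3 * z.im < z.re} ∩ {z | 0 < z.re}
  have hU : IsOpen U :=
    (Metric.isOpen_ball.inter (isOpen_lt (by fun_prop) (by fun_prop))).inter
      (isOpen_lt (by fun_prop) (by fun_prop))
  have hUne : U.Nonempty := ⟨(r / 2 : ℝ), ⟨by simpa [abs_of_pos hr] using half_lt_self hr,
    by simpa using half_pos hr⟩, by simpa using half_pos hr⟩
  have hsub : U ⊆ cell 0 ∩ Metric.ball 0 δ := by
    rintro z ⟨⟨hz, h1 : √3 * z.im < z.re⟩, h2 : 0 < z.re⟩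
    rw [cell_zero_eq]
    exact ⟨⟨ball_subset_Tri (Metric.ball_subset_ball (min_le_right _ _) hz), h1.le, h2.le,
      fun h => h1.ne' h.2⟩, Metric.ball_subset_ball (min_le_left _ _) hz⟩
  exact (hU.measure_pos volume hUne).trans_le (measure_mono hsub)

instance : IsFiniteMeasure (volume.restrict (cell 0)) :=
  isFiniteMeasure_restrict.2 (volume_cell_zero_le.trans_lt ENNReal.ofReal_lt_top).ne

instance : NeZero (volume.restrict (cell 0)) := ⟨by
  simpa [Measure.restrict_eq_zero] using
    ((volume_cell_zero_inter_ball_pos one_pos).trans_le (measure_mono inter_subset_left)).ne'⟩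

theorem three_mul_measureReal_cell_zero_le : 3 * (volume.restrict (cell 0)).real univ ≤ 1 := by
  have := ENNReal.toReal_le_of_le_ofReal (by norm_num) volume_cell_zero_le
  rw [measureReal_restrict_apply_univ, measureReal_def]
  linarith

theorem exists_measure_ne_zero_and_ae_le {c : ℂ → ℝ} (hc0 : ContinuousWithinAt c Tri 0) {y : ℝ}
    (hy : y < c 0) : ∃ A : Set ℂ, volume.restrict (cell 0) A ≠ 0 ∧
      ∀ᵐ x ∂(volume.restrict (cell 0)).restrict A, y ≤ c x := by
  obtain ⟨δ, hδ, hδc⟩ := Metric.continuousWithinAt_iff.1 hc0 (c 0 - y) (by linarith)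
  refine ⟨Metric.ball 0 δ, ?_, ?_⟩
  · rw [Measure.restrict_apply measurableSet_ball, inter_comm]
    exact (volume_cell_zero_inter_ball_pos hδ).ne'
  · rw [Measure.restrict_restrict measurableSet_ball]
    refine ae_restrict_of_forall_mem (measurableSet_ball.inter measurableSet_cell_zero)
      fun x hx => ?_
    linarith [(abs_lt.1 (hδc hx.2.1.1 hx.1)).1]

theorem lambdaBarStar_lt_lambdaStar_general
    (c : ℂ → ℝ) (hc_meas : Measurable c) (hc_nonneg : ∀ x, 0 ≤ c x)
    (hc_bdd : BddAbove (c '' Tri))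
    (hc0 : ContinuousWithinAt c Tri 0) :
    ∀ y : ℝ, gamma c < y → y < c 0 / 3 → LambdaBarStar c y < LambdaStar c (3 * y) := by
  intro y hγy hy
  obtain ⟨M, hM⟩ := hc_bdd
  have hcM : ∀ᵐ x ∂volume.restrict (cell 0), c x ∈ Icc 0 M :=
    ae_restrict_of_forall_mem measurableSet_cell_zero
      fun x hx => ⟨hc_nonneg x, hM (mem_image_of_mem c hx.1.1)⟩
  have hy0 : 0 ≤ y := (integral_nonneg hc_nonneg).trans hγy.le
  obtain ⟨A, hA, hyA⟩ := exists_measure_ne_zero_and_ae_le hc0 (by linarith : y < c 0)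
  refine iSup_coe_lt_iSup_coe_of_mul_le (k := 3) (by norm_num) (fun θ => ?_)
    (bddAbove_range_mul_sub_log_integral_exp_add hc_meas.aestronglyMeasurable hcM hA hy0
      (by norm_num) hyA) ?_
  · have := log_three_mul_le_three_mul_log_add
      (integral_exp_pos (integrable_exp_mul_of_ae_mem_Icc hc_meas.aestronglyMeasurable hcM θ))
    simp only [Lambda, LambdaBar]
    linarith
  · obtain ⟨θ, hθ⟩ := exists_log_mul_integral_exp_lt hc_meas.aestronglyMeasurable hcM
      (by norm_num) three_mul_measureReal_cell_zero_le hγy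
    exact ⟨θ, sub_pos.2 hθ⟩

/-- `γ = ∫_{𝕋₁} c` (defined in the preamble as `gamma`). **Strict comparison of the rate
functions above the mean** (Proposition 1.4 (iii)): under (C1), (C5), continuity of `c` at
`0` and `B₁` and non-degeneracy of `c` on `𝕋₁`, for all `γ < y < c(0)/3` one has
`Λ̄*(y) < Λ*(3y)`. -/
theorem lambdaBarStar_lt_lambdaStar
    (c : ℂ → ℝ) (hc_meas : Measurable c) (hc_nonneg : ∀ x, 0 ≤ c x)
    (hc_bdd : BddAbove (c '' Tri))
    (hC1 : C1 c) (hC5 : C5 c)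
    (hc0 : ContinuousWithinAt c Tri 0) (hcB : ContinuousWithinAt c Tri (Bin 0))
    (hnc : ¬ ∃ r : ℝ, ∀ᵐ x ∂(volume.restrict (cell 0)), c x = r) :
    ∀ y : ℝ, gamma c < y → y < c 0 / 3 → LambdaBarStar c y < LambdaStar c (3 * y) :=
  lambdaBarStar_lt_lambdaStar_general c hc_meas hc_nonneg hc_bdd hc0

end LoadOpt
end
end
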